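/- arXiv:1703.00742 — 2 statements merged into one kernel-verified Lean document; each statement's English description precedes it below -/
import Mathlib

section
/- Let k ≥ 1 be an integer, ε ∈ {−1, +1}, and x > 0 a real number. Then |I_ε(0, 0, k; x)| ≤ √π · (4x)^{−k+1/2} / Γ(k + 1/2). -/
/-- `e(x) := exp(2πi x)`. -/
noncomputable def e2 (x : ℂ) : ℂ := Complex.exp (2 * Real.pi * Complex.I * x)

/-- The confluent hypergeometric function `₁F₁(a, b; x)` defined by its series. -/
noncomputable def hyp1F1 (a b x : ℂ) : ℂ :=
  (Complex.Gamma b / Complex.Gamma a) *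
    ∑' j : ℕ, (Complex.Gamma (a + j) / Complex.Gamma (b + j)) * x ^ j / (Nat.factorial j)

/-- `I_ε(u, v, k; x)`. -/
noncomputable def Ieps (ε : ℤ) (u v : ℂ) (k : ℕ) (x : ℝ) : ℂ :=
  e2 ((ε : ℂ) / 8 - ε * k / 4) * (x : ℂ) ^ ((1 : ℂ) / 2 - k) *
    (Complex.Gamma ((k : ℂ) - v - u) / Complex.Gamma (2 * k)) *
    hyp1F1 ((k : ℂ) - v - u) (2 * k) (-(e2 (-(ε : ℂ) / 4)) / x)

/-!
For `k = m + 1` the Euler integral, obtained by expanding `exp (z t)` termwise against the Beta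
integrals `∫₀¹ tᵖ (1 - t)^q dt = p! q! / (p + q + 1)!`, reads
`₁F₁(m + 1, 2m + 2; z) = (2m + 1)! / (m!)² ∫₀¹ exp (z t) tᵐ (1 - t)ᵐ dt`.
For `ε = ±1` the argument `z = ∓i/x` is purely imaginary, so `|exp (z t)| = 1` and the same Beta
integral gives `|₁F₁| ≤ 1`. What remains, `x^(1/2 - k) Γ(k) / Γ(2k)`, is exactly the right-hand
side by Legendre's duplication formula.
-/

open Real MeasureTheory
open scoped Nat

lemma integral_ofReal_pow_mul_one_sub_pow (p q : ℕ) :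
    ∫ t in (0 : ℝ)..1, (t : ℂ) ^ p * (1 - (t : ℂ)) ^ q = p ! * q ! / (p + q + 1)! := by
  have h := Complex.betaIntegral_eq_Gamma_mul_div (p + 1) (q + 1)
    (by simp; positivity) (by simp; positivity)
  rw [show (p + 1 + (q + 1) : ℂ) = ↑(p + q + 1) + 1 by push_cast; ring] at h
  simp only [Complex.Gamma_nat_eq_factorial] at h
  simpa [Complex.betaIntegral, ← Complex.cpow_natCast] using h

lemma integral_pow_mul_one_sub_pow (p q : ℕ) :
    ∫ t in (0 : ℝ)..1, t ^ p * (1 - t) ^ q = p ! * q ! / (p + q + 1)! := by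
  apply Complex.ofReal_injective
  push_cast [← intervalIntegral.integral_ofReal]
  exact integral_ofReal_pow_mul_one_sub_pow p q

lemma norm_ofReal_pow_mul_one_sub_pow {t : ℝ} (ht : t ∈ Set.Icc (0 : ℝ) 1) (p q : ℕ) :
    ‖(t : ℂ) ^ p * (1 - (t : ℂ)) ^ q‖ = t ^ p * (1 - t) ^ q := by
  obtain ⟨h0, h1⟩ := ht
  rw [norm_mul, norm_pow, norm_pow, ← Complex.ofReal_one, ← Complex.ofReal_sub,
    Complex.norm_real, Complex.norm_real, Real.norm_of_nonneg h0,
    Real.norm_of_nonneg (sub_nonneg.2 h1)]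

lemma hasSum_integral_cexp_mul_pow_mul_one_sub_pow (p q : ℕ) (z : ℂ) :
    HasSum (fun n : ℕ ↦ z ^ n / n ! * ((p + n)! * q ! / (p + n + q + 1)!))
      (∫ t in (0 : ℝ)..1, Complex.exp (z * t) * (t : ℂ) ^ p * (1 - (t : ℂ)) ^ q) := by
  have hterm (n : ℕ) (t : ℝ) : (z * t) ^ n / n ! * ((t : ℂ) ^ p * (1 - (t : ℂ)) ^ q) =
      z ^ n / n ! * ((t : ℂ) ^ (p + n) * (1 - (t : ℂ)) ^ q) := by ring
  have hsum := intervalIntegral.hasSum_integral_of_dominated_convergence (a := 0) (b := 1)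
    (μ := volume)
    (F := fun n (t : ℝ) ↦ z ^ n / n ! * ((t : ℂ) ^ (p + n) * (1 - (t : ℂ)) ^ q))
    (f := fun t ↦ Complex.exp (z * t) * (t : ℂ) ^ p * (1 - (t : ℂ)) ^ q)
    (fun n _ ↦ ‖z‖ ^ n / n !)
    (fun n ↦ by fun_prop)
    (fun n ↦ Filter.Eventually.of_forall fun t ht ↦ by
      obtain ⟨h0, h1⟩ := Set.uIoc_of_le zero_le_one (α := ℝ) ▸ ht
      rw [norm_mul, norm_div, norm_pow, Complex.norm_natCast,
        norm_ofReal_pow_mul_one_sub_pow ⟨h0.le, h1⟩]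
      exact mul_le_of_le_one_right (by positivity) <| mul_le_one₀ (pow_le_one₀ h0.le h1)
        (pow_nonneg (sub_nonneg.2 h1) _) (pow_le_one₀ (sub_nonneg.2 h1) (sub_le_self 1 h0.le)))
    (Filter.Eventually.of_forall fun _ _ ↦ Real.summable_pow_div_factorial ‖z‖)
    intervalIntegrable_const
    (Filter.Eventually.of_forall fun t _ ↦ by
      simpa only [mul_assoc, hterm, Complex.exp_eq_exp_ℂ] using
        (NormedSpace.expSeries_div_hasSum_exp (z * t)).mul_right ((t : ℂ) ^ p * (1 - (t : ℂ)) ^ q))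
  simpa only [intervalIntegral.integral_const_mul, integral_ofReal_pow_mul_one_sub_pow] using hsum

lemma hyp1F1_nat_add_one_eq_integral (p q : ℕ) (z : ℂ) :
    hyp1F1 (p + 1) (p + q + 2) z = (p + q + 1)! / (p ! * q !) *
      ∫ t in (0 : ℝ)..1, Complex.exp (z * t) * (t : ℂ) ^ p * (1 - (t : ℂ)) ^ q := by
  have hGamma (n : ℕ) : Complex.Gamma (n + 1) = n ! := Complex.Gamma_nat_eq_factorial n
  have hseries : ∑' j : ℕ, Complex.Gamma (p + 1 + j) / Complex.Gamma (p + q + 2 + j) * z ^ j / j !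
      = (q ! : ℂ)⁻¹ * ∫ t in (0 : ℝ)..1, Complex.exp (z * t) * (t : ℂ) ^ p * (1 - (t : ℂ)) ^ q := by
    rw [← (hasSum_integral_cexp_mul_pow_mul_one_sub_pow p q z).tsum_eq, ← tsum_mul_left]
    refine tsum_congr fun j ↦ ?_
    rw [show (p + 1 + j : ℂ) = ↑(p + j) + 1 by push_cast; ring,
      show (p + q + 2 + j : ℂ) = ↑(p + j + q + 1) + 1 by push_cast; ring, hGamma, hGamma]
    have hq : (q ! : ℂ) ≠ 0 := Nat.cast_ne_zero.2 q.factorial_ne_zero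
    field_simp
  rw [hyp1F1, hseries, show (p + q + 2 : ℂ) = ↑(p + q + 1) + 1 by push_cast; ring,
    hGamma, hGamma]
  field_simp

lemma norm_hyp1F1_nat_add_one_le_one (p q : ℕ) {z : ℂ} (hz : z.re ≤ 0) :
    ‖hyp1F1 (p + 1) (p + q + 2) z‖ ≤ 1 := by
  have hintegral : ‖∫ t in (0 : ℝ)..1, Complex.exp (z * t) * (t : ℂ) ^ p * (1 - (t : ℂ)) ^ q‖
      ≤ p ! * q ! / (p + q + 1)! := by
    rw [← integral_pow_mul_one_sub_pow]
    refine intervalIntegral.norm_integral_le_of_norm_le zero_le_one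
      (Filter.Eventually.of_forall fun t ht ↦ ?_) (Continuous.intervalIntegrable (by fun_prop) _ _)
    have hexp : ‖Complex.exp (z * t)‖ ≤ 1 := by
      rw [Complex.norm_exp, Real.exp_le_one_iff, Complex.re_mul_ofReal]
      exact mul_nonpos_of_nonpos_of_nonneg hz ht.1.le
    rw [mul_assoc, norm_mul, norm_ofReal_pow_mul_one_sub_pow (Set.Ioc_subset_Icc_self ht)]
    exact mul_le_of_le_one_left
      (mul_nonneg (pow_nonneg ht.1.le _) (pow_nonneg (sub_nonneg.2 ht.2) _)) hexp
  rw [hyp1F1_nat_add_one_eq_integral, norm_mul]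
  calc _ ≤ ((p + q + 1)! / (p ! * q !) : ℝ) * (p ! * q ! / (p + q + 1)!) := by
        gcongr
        simp
    _ = 1 := by field_simp

lemma Gamma_div_Gamma_two_mul {s : ℝ} (hs : 0 < s) :
    Gamma s / Gamma (2 * s) = √π * 4 ^ (-s + 1 / 2) / Gamma (s + 1 / 2) := by
  have hfour : (4 : ℝ) ^ (-s + 1 / 2) = 2 ^ (1 - 2 * s) := by
    rw [show (4 : ℝ) = 2 ^ (2 : ℕ) by norm_num, ← Real.rpow_natCast_mul zero_le_two]
    ring_nf
  have h2s : Gamma (2 * s) ≠ 0 := (Gamma_pos_of_pos (by positivity)).ne'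
  have hs_half : Gamma (s + 1 / 2) ≠ 0 := (Gamma_pos_of_pos (by positivity)).ne'
  rw [hfour, div_eq_div_iff h2s hs_half, Gamma_mul_Gamma_add_half_of_pos hs]
  ring

lemma norm_e2 (z : ℂ) : ‖e2 z‖ = Real.exp (-(2 * π * z.im)) := by
  simp [e2, Complex.norm_exp]

lemma re_e2_div_four_of_odd {n : ℤ} (hn : Odd n) : (e2 (n / 4)).re = 0 := by
  obtain ⟨m, rfl⟩ := hn
  rw [e2, show 2 * π * Complex.I * ((2 * m + 1 : ℤ) / 4 : ℂ)
      = ((2 * m + 1) * π / 2 : ℝ) * Complex.I by push_cast; ring,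
    Complex.exp_ofReal_mul_I_re, Real.cos_eq_zero_iff]
  exact ⟨m, rfl⟩

lemma norm_Ieps_zero_zero (ε : ℤ) (k : ℕ) {x : ℝ} (hx : 0 < x) :
    ‖Ieps ε 0 0 k x‖ = x ^ (-(k : ℝ) + 1 / 2) * (Gamma k / Gamma (2 * k)) *
      ‖hyp1F1 k (2 * k) (-e2 (-(ε : ℂ) / 4) / x)‖ := by
  have hphase : ‖e2 ((ε : ℂ) / 8 - ε * k / 4)‖ = 1 := by
    rw [norm_e2]; simp
  have hpow : ‖(x : ℂ) ^ ((1 : ℂ) / 2 - k)‖ = x ^ (-(k : ℝ) + 1 / 2) := by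
    rw [show (1 : ℂ) / 2 - k = ((-(k : ℝ) + 1 / 2 : ℝ) : ℂ) by push_cast; ring,
      Complex.norm_cpow_eq_rpow_re_of_pos hx, Complex.ofReal_re]
  have hGamma : ‖Complex.Gamma k / Complex.Gamma (2 * k)‖ = Gamma k / Gamma (2 * k) := by
    rw [← Complex.ofReal_natCast, ← Complex.ofReal_ofNat, ← Complex.ofReal_mul,
      Complex.Gamma_ofReal, Complex.Gamma_ofReal, ← Complex.ofReal_div, Complex.norm_real,
      Real.norm_of_nonneg (by positivity)]
  simp only [Ieps, sub_zero, norm_mul, hphase, hpow, hGamma, one_mul]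

theorem stmt4 (k : ℕ) (hk : 1 ≤ k) (ε : ℤ) (hε : ε = -1 ∨ ε = 1) (x : ℝ) (hx : 0 < x) :
    ‖Ieps ε 0 0 k x‖ ≤
      Real.sqrt Real.pi * (4 * x) ^ (-(k : ℝ) + 1 / 2) / Real.Gamma ((k : ℝ) + 1 / 2) := by
  have hz : (-e2 (-(ε : ℂ) / 4) / x).re ≤ 0 := by
    have hodd : Odd (-ε) := by rcases hε with rfl | rfl <;> decide
    have hre := re_e2_div_four_of_odd hodd
    push_cast at hre
    simp [Complex.div_ofReal_re, hre]
  obtain ⟨m, rfl⟩ : ∃ m, k = m + 1 := ⟨k - 1, by omega⟩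
  have hF := norm_hyp1F1_nat_add_one_le_one m m hz
  rw [show (m : ℂ) + 1 = (m + 1 : ℕ) by push_cast; ring,
    show (m : ℂ) + m + 2 = 2 * (m + 1 : ℕ) by push_cast; ring] at hF
  calc ‖Ieps ε 0 0 (m + 1) x‖
      ≤ x ^ (-((m + 1 : ℕ) : ℝ) + 1 / 2) * (Gamma (m + 1 : ℕ) / Gamma (2 * (m + 1 : ℕ))) := by
        rw [norm_Ieps_zero_zero ε _ hx]
        exact mul_le_of_le_one_right (by positivity) hF
    _ = _ := by
        rw [Gamma_div_Gamma_two_mul (by positivity), Real.mul_rpow (by norm_num) hx.le]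
        ring
end

section
/- For every ε > 0 there exists a constant A > 0 such that for all positive integers l and k: |W_1(l, k)| ≤ A · l^{1/2+ε} · k^{−1} · (e/20)^{2k}, where e is Euler's number. -/
/-- An inverse `n*` of `n` modulo `c`. -/
noncomputable def nstar (c n : ℕ) : ℕ := (((n : ZMod c)⁻¹ : ZMod c)).val

/-- The summand `T_{l,k}(c,n)`. -/
noncomputable def Tlk (l k c n : ℕ) : ℂ :=
  ((1 : ℝ) / Real.sqrt (c * n)) * ((1 : ℝ) / Real.sqrt (2 * Real.pi)) *
    (e2 ((nstar c n * l : ℕ) / (c : ℂ) + 1 / 8) *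
        Ieps (-1) 0 0 (2 * k) ((c : ℝ) * n / (2 * Real.pi * l))
      + e2 (-((nstar c n * l : ℕ) / (c : ℂ)) - 1 / 8) *
        Ieps 1 0 0 (2 * k) ((c : ℝ) * n / (2 * Real.pi * l)))

open Classical in
/-- `W_1(l, k)`: the part of the sum with `πl/(cn) < k/5`. -/
noncomputable def W1 (l k : ℕ) : ℂ :=
  ∑' p : ℕ × ℕ,
    if 0 < p.1 ∧ 0 < p.2 ∧ Nat.Coprime p.2 p.1 ∧
        Real.pi * l / ((p.1 : ℝ) * p.2) < (k : ℝ) / 5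
    then Tlk l k p.1 p.2 else 0

open Classical in
/-- `W_2(l, k)`: the part of the sum with `πl/(cn) ≥ k/5`. -/
noncomputable def W2 (l k : ℕ) : ℂ :=
  ∑' p : ℕ × ℕ,
    if 0 < p.1 ∧ 0 < p.2 ∧ Nat.Coprime p.2 p.1 ∧
        (k : ℝ) / 5 ≤ Real.pi * l / ((p.1 : ℝ) * p.2)
    then Tlk l k p.1 p.2 else 0

/-!
Euler's integral `₁F₁(a, b; z) = Γ(b) / (Γ(a) Γ(b - a)) ∫₀¹ t^(a-1) (1-t)^(b-a-1) e^(zt) dt`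
gives `|₁F₁(a, b; z)| ≤ 1` for `0 < a < b` and `Re z ≤ 0`. The hypergeometric factors of
`T_{l,k}(c,n)` have purely imaginary argument `±i/x`, `x = cn/(2πl)`, so
`|T_{l,k}(c,n)| ≤ l^(-1/2) x^(-2k) (2k)!/(4k)!`. On the range of `W_1` we have `x ≥ 5/(2k)`, and
trading `x^(-2k)` for `(5/(2k))^(s-2k) x^(-s)` with `s = min(1 + ε, 2) > 1` makes the sum over
`(c, n)` converge to at most `ζ(s)²`, while Stirling's formula bounds `(2k/5)^(2k) (2k)!/(4k)!`
by `(e/20)^(2k)`.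
-/

open Real MeasureTheory Set
open scoped Nat

lemma Complex.ofReal_rpow_mul_one_sub_rpow {t : ℝ} (ht : t ∈ Icc (0 : ℝ) 1) (u v : ℝ) :
    ((t ^ (u - 1) * (1 - t) ^ (v - 1) : ℝ) : ℂ) =
      (t : ℂ) ^ ((u : ℂ) - 1) * (1 - (t : ℂ)) ^ ((v : ℂ) - 1) := by
  rw [Complex.ofReal_mul, Complex.ofReal_cpow ht.1, Complex.ofReal_cpow (sub_nonneg.2 ht.2)]
  push_cast
  rfl

lemma Complex.betaIntegral_ofReal (u v : ℝ) :
    Complex.betaIntegral u v =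
      ((∫ t in Ioo (0 : ℝ) 1, t ^ (u - 1) * (1 - t) ^ (v - 1) : ℝ) : ℂ) := by
  rw [Complex.betaIntegral, intervalIntegral.integral_of_le zero_le_one,
    ← integral_Ioc_eq_integral_Ioo, ← integral_complex_ofReal]
  exact setIntegral_congr_fun measurableSet_Ioc fun t ht =>
    (Complex.ofReal_rpow_mul_one_sub_rpow (Ioc_subset_Icc_self ht) u v).symm

lemma integrableOn_rpow_mul_one_sub_rpow {u v : ℝ} (hu : 0 < u) (hv : 0 < v) :
    IntegrableOn (fun t : ℝ => t ^ (u - 1) * (1 - t) ^ (v - 1)) (Ioo 0 1) := by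
  have h := Complex.betaIntegral_convergent (u := u) (v := v) (by simpa) (by simpa)
  rw [intervalIntegrable_iff_integrableOn_Ioo_of_le zero_le_one] at h
  refine (show IntegrableOn _ _ _ from h.re).congr_fun (fun t ht => ?_) measurableSet_Ioo
  simp only [RCLike.re_to_complex]
  rw [← Complex.ofReal_rpow_mul_one_sub_rpow (Ioo_subset_Icc_self ht), Complex.ofReal_re]

theorem Real.Gamma_mul_Gamma_eq_integral {u v : ℝ} (hu : 0 < u) (hv : 0 < v) :
    Gamma u * Gamma v = Gamma (u + v) * ∫ t in Ioo (0 : ℝ) 1, t ^ (u - 1) * (1 - t) ^ (v - 1) := by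
  have h := Complex.Gamma_mul_Gamma_eq_betaIntegral (s := u) (t := v) (by simpa) (by simpa)
  rw [Complex.betaIntegral_ofReal, ← Complex.ofReal_add, Complex.Gamma_ofReal,
    Complex.Gamma_ofReal, Complex.Gamma_ofReal] at h
  exact_mod_cast h

section Kummer

variable {a b : ℝ}

lemma integral_beta_kernel_mul_pow (ha : 0 < a) (hab : a < b) (j : ℕ) :
    ∫ t in Ioo (0 : ℝ) 1, t ^ (a - 1) * (1 - t) ^ (b - a - 1) * t ^ j =
      Gamma (a + j) * Gamma (b - a) / Gamma (b + j) := by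
  have h := Real.Gamma_mul_Gamma_eq_integral (u := a + j) (v := b - a) (by positivity)
    (sub_pos.2 hab)
  rw [show a + j + (b - a) = b + j by ring] at h
  rw [h, mul_div_cancel_left₀ _ (Gamma_pos_of_pos (by linarith [j.cast_nonneg (α := ℝ)])).ne']
  refine setIntegral_congr_fun measurableSet_Ioo fun t ht => ?_
  rw [show a + j - 1 = a - 1 + j by ring, rpow_add ht.1, rpow_natCast]
  ring

theorem hyp1F1_ofReal_eq_integral (ha : 0 < a) (hab : a < b) (z : ℂ) :
    hyp1F1 a b z = ((Gamma b / (Gamma a * Gamma (b - a)) : ℝ) : ℂ) *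
      ∫ t in Ioo (0 : ℝ) 1,
        ((t ^ (a - 1) * (1 - t) ^ (b - a - 1) : ℝ) : ℂ) * Complex.exp (z * t) := by
  set r : ℝ → ℝ := fun t => t ^ (a - 1) * (1 - t) ^ (b - a - 1)
  have hr : IntegrableOn r (Ioo 0 1) := integrableOn_rpow_mul_one_sub_rpow ha (sub_pos.2 hab)
  have hsum : HasSum (fun j : ℕ => ∫ t in Ioo (0 : ℝ) 1, (r t : ℂ) * ((z * t) ^ j / j !))
      (∫ t in Ioo (0 : ℝ) 1, (r t : ℂ) * Complex.exp (z * t)) := by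
    refine hasSum_integral_of_dominated_convergence (fun j t => r t * (‖z‖ ^ j / j !))
      (fun j => Measurable.aestronglyMeasurable (by fun_prop)) (fun j => ?_)
      (.of_forall fun t => (Real.summable_pow_div_factorial ‖z‖).mul_left _)
      ?_ ?_
    · refine ae_restrict_of_forall_mem measurableSet_Ioo fun t ht => ?_
      have hr0 : 0 ≤ r t :=
        mul_nonneg (rpow_nonneg ht.1.le _) (rpow_nonneg (sub_nonneg.2 ht.2.le) _)
      rw [norm_mul, Complex.norm_real, norm_of_nonneg hr0, norm_div, norm_pow, norm_mul,
        Complex.norm_real, norm_of_nonneg ht.1.le, mul_pow, Complex.norm_natCast]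
      gcongr
      exact mul_le_of_le_one_right (by positivity) (pow_le_one₀ ht.1.le ht.2.le)
    · simp_rw [tsum_mul_left]
      exact hr.mul_const _
    · refine .of_forall fun t => ?_
      have := (NormedSpace.expSeries_div_hasSum_exp (z * t)).mul_left (r t : ℂ)
      rwa [← Complex.exp_eq_exp_ℂ] at this
  have hterm : ∀ j : ℕ, (∫ t in Ioo (0 : ℝ) 1, (r t : ℂ) * ((z * t) ^ j / j !)) =
      Complex.Gamma (b - a) * (Complex.Gamma (a + j) / Complex.Gamma (b + j) * z ^ j / j !) := by
    intro j
    have h (t : ℝ) : (r t : ℂ) * ((z * t) ^ j / j !) = ((r t * t ^ j : ℝ) : ℂ) * (z ^ j / j !) := by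
      push_cast; ring
    simp_rw [h]
    rw [integral_mul_const, integral_complex_ofReal, integral_beta_kernel_mul_pow ha hab j]
    have hΓ : Complex.Gamma (b + j) ≠ 0 :=
      Complex.Gamma_ne_zero_of_re_pos (by simp; linarith [j.cast_nonneg (α := ℝ)])
    push_cast [← Complex.Gamma_ofReal]
    field_simp
  have hΓ : Complex.Gamma (b - a) ≠ 0 := Complex.Gamma_ne_zero_of_re_pos (by simpa using hab)
  simp_rw [hterm] at hsum
  rw [hyp1F1, ← hsum.tsum_eq, tsum_mul_left]
  push_cast [← Complex.Gamma_ofReal]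
  field_simp

theorem norm_hyp1F1_ofReal_le_one (ha : 0 < a) (hab : a < b) {z : ℂ} (hz : z.re ≤ 0) :
    ‖hyp1F1 a b z‖ ≤ 1 := by
  have hba : 0 < b - a := sub_pos.2 hab
  have hbeta := Real.Gamma_mul_Gamma_eq_integral ha hba
  rw [add_sub_cancel] at hbeta
  have hbound : ‖∫ t in Ioo (0 : ℝ) 1,
      ((t ^ (a - 1) * (1 - t) ^ (b - a - 1) : ℝ) : ℂ) * Complex.exp (z * t)‖ ≤
      ∫ t in Ioo (0 : ℝ) 1, t ^ (a - 1) * (1 - t) ^ (b - a - 1) := by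
    refine norm_integral_le_of_norm_le (integrableOn_rpow_mul_one_sub_rpow ha hba)
      (ae_restrict_of_forall_mem measurableSet_Ioo fun t ht => ?_)
    have hexp : ‖Complex.exp (z * t)‖ ≤ 1 := by
      rw [Complex.norm_exp, Complex.re_mul_ofReal, exp_le_one_iff]
      exact mul_nonpos_of_nonpos_of_nonneg hz ht.1.le
    have hr : 0 ≤ t ^ (a - 1) * (1 - t) ^ (b - a - 1) :=
      mul_nonneg (rpow_nonneg ht.1.le _) (rpow_nonneg (sub_nonneg.2 ht.2.le) _)
    rw [norm_mul, Complex.norm_real, norm_of_nonneg hr]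
    exact mul_le_of_le_one_right hr hexp
  have hΓab : 0 < Gamma a * Gamma (b - a) := mul_pos (Gamma_pos_of_pos ha) (Gamma_pos_of_pos hba)
  have hΓ : 0 < Gamma b / (Gamma a * Gamma (b - a)) :=
    div_pos (Gamma_pos_of_pos (ha.trans hab)) hΓab
  rw [hyp1F1_ofReal_eq_integral ha hab, norm_mul, Complex.norm_real, norm_of_nonneg hΓ.le]
  calc _ ≤ Gamma b / (Gamma a * Gamma (b - a)) *
        ∫ t in Ioo (0 : ℝ) 1, t ^ (a - 1) * (1 - t) ^ (b - a - 1) := by gcongr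
    _ = 1 := by
      rw [div_mul_eq_mul_div, ← hbeta, div_self hΓab.ne']

end Kummer

lemma norm_e2_eq_one {x : ℂ} (hx : x.im = 0) : ‖e2 x‖ = 1 := by
  simp [e2, Complex.norm_exp, hx]

lemma re_e2_ofReal (t : ℝ) : (e2 t).re = cos (2 * π * t) := by
  rw [e2, Complex.exp_re]
  simp

lemma norm_Gamma_div_Gamma_two_mul {K : ℕ} (hK : K ≠ 0) :
    ‖Complex.Gamma K / Complex.Gamma (2 * K)‖ = 2 * K ! / (2 * K)! := by
  obtain ⟨n, rfl⟩ := Nat.exists_eq_succ_of_ne_zero hK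
  have h2 : (2 * (n + 1 : ℕ) : ℂ) = (2 * n + 1 : ℕ) + 1 := by push_cast; ring
  rw [h2, Nat.cast_succ, Complex.Gamma_nat_eq_factorial, Complex.Gamma_nat_eq_factorial,
    norm_div, Complex.norm_natCast, Complex.norm_natCast, show 2 * (n + 1) = 2 * n + 1 + 1 by ring,
    Nat.factorial_succ (2 * n + 1), Nat.factorial_succ n]
  push_cast
  field_simp
  ring

theorem norm_Ieps_le {ε : ℤ} (hε : ε = 1 ∨ ε = -1) {K : ℕ} (hK : K ≠ 0) {x : ℝ} (hx : 0 < x) :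
    ‖Ieps ε 0 0 K x‖ ≤ x ^ ((1 : ℝ) / 2 - K) * (2 * K ! / (2 * K)!) := by
  have hre : (-e2 (-(ε : ℂ) / 4) / x).re ≤ 0 := by
    have hcos : (e2 (-(ε : ℂ) / 4)).re = 0 := by
      rcases hε with rfl | rfl
      · rw [show -((1 : ℤ) : ℂ) / 4 = ((-(1 / 4) : ℝ) : ℂ) by push_cast; ring, re_e2_ofReal,
          show 2 * π * -(1 / 4) = -(π / 2) by ring, cos_neg, cos_pi_div_two]
      · rw [show -((-1 : ℤ) : ℂ) / 4 = ((1 / 4 : ℝ) : ℂ) by push_cast; ring, re_e2_ofReal,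
          show 2 * π * (1 / 4) = π / 2 by ring, cos_pi_div_two]
    rw [Complex.div_ofReal_re, Complex.neg_re, hcos, neg_zero, zero_div]
  have hK1 : (K : ℝ) < 2 * K := by
    have : (0 : ℝ) < K := by exact_mod_cast Nat.pos_of_ne_zero hK
    linarith
  have hF := norm_hyp1F1_ofReal_le_one (Nat.cast_pos.2 (Nat.pos_of_ne_zero hK)) hK1 hre
  push_cast at hF
  rw [Ieps, norm_mul, norm_mul, norm_mul, norm_e2_eq_one (by simp), one_mul, sub_zero, sub_zero,
    norm_Gamma_div_Gamma_two_mul hK, Complex.norm_cpow_eq_rpow_re_of_pos hx]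
  have hre' : (1 / 2 - K : ℂ).re = 1 / 2 - K := by simp
  rw [hre']
  exact mul_le_of_le_one_right (by positivity) hF

theorem norm_Tlk_le {l k c n : ℕ} (hl : 0 < l) (hk : 0 < k) (hc : 0 < c) (hn : 0 < n) :
    ‖Tlk l k c n‖ ≤ (l : ℝ) ^ (-(1 / 2 : ℝ)) * (c * n / (2 * π * l)) ^ (-(2 * k : ℝ)) *
      ((2 * k)! / (2 * (2 * k))!) := by
  set x : ℝ := c * n / (2 * π * l)
  have hx : 0 < x := by positivity
  set F : ℝ := (2 * k)! / (2 * (2 * k))!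
  have hI (ε : ℤ) (hε : ε = 1 ∨ ε = -1) :
      ‖Ieps ε 0 0 (2 * k) x‖ ≤ x ^ ((1 : ℝ) / 2 - 2 * k) * (2 * F) := by
    simpa [F, mul_div_assoc] using norm_Ieps_le hε (by positivity : 2 * k ≠ 0) hx
  have hsum : ‖e2 ((nstar c n * l : ℕ) / (c : ℂ) + 1 / 8) * Ieps (-1) 0 0 (2 * k) x
      + e2 (-((nstar c n * l : ℕ) / (c : ℂ)) - 1 / 8) * Ieps 1 0 0 (2 * k) x‖ ≤
      2 * (x ^ ((1 : ℝ) / 2 - 2 * k) * (2 * F)) := by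
    refine (norm_add_le _ _).trans ?_
    rw [norm_mul, norm_mul, norm_e2_eq_one (by simp), norm_e2_eq_one (by simp), one_mul,
      one_mul]
    linarith [hI _ (.inr rfl), hI _ (.inl rfl)]
  have hsqrt_x : x ^ (1 / 2 : ℝ) = √(c * n) / (√(2 * π) * √l) := by
    rw [← sqrt_eq_rpow, sqrt_div' _ (by positivity), sqrt_mul (by positivity : (0 : ℝ) ≤ 2 * π) l]
  have hsplit : x ^ ((1 : ℝ) / 2 - 2 * k) = x ^ (1 / 2 : ℝ) * x ^ (-(2 * k : ℝ)) := by
    rw [← rpow_add hx, sub_eq_add_neg]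
  rw [Tlk, norm_mul, norm_mul]
  simp only [norm_div, Complex.norm_real, norm_one, Real.norm_eq_abs, abs_of_nonneg (sqrt_nonneg _)]
  calc _ ≤ 1 / √(c * n) * (1 / √(2 * π)) * (2 * (x ^ ((1 : ℝ) / 2 - 2 * k) * (2 * F))) := by
        gcongr
    _ = 2 / π * ((l : ℝ) ^ (-(1 / 2 : ℝ)) * x ^ (-(2 * k : ℝ)) * F) := by
        rw [hsplit, hsqrt_x, rpow_neg l.cast_nonneg, ← sqrt_eq_rpow]
        field_simp
        rw [sq_sqrt (by positivity)]
    _ ≤ _ := mul_le_of_le_one_left (by positivity) ((div_le_one pi_pos).2 two_le_pi)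

theorem Nat.factorial_le_exp_one_mul_sqrt_mul_pow {n : ℕ} (hn : n ≠ 0) :
    (n ! : ℝ) ≤ exp 1 * √n * (n / exp 1) ^ n := by
  obtain ⟨m, rfl⟩ := Nat.exists_eq_succ_of_ne_zero hn
  have hseq : Stirling.stirlingSeq (m + 1) ≤ exp 1 / √2 := by
    simpa [Stirling.stirlingSeq_one] using Stirling.stirlingSeq'_antitone (Nat.zero_le m)
  have hpos : 0 < √(2 * (m + 1 : ℕ)) * ((m + 1 : ℕ) / exp 1) ^ (m + 1) := by positivity
  rw [Stirling.stirlingSeq, div_le_iff₀ hpos] at hseq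
  calc _ ≤ exp 1 / √2 * (√(2 * (m + 1 : ℕ)) * ((m + 1 : ℕ) / exp 1) ^ (m + 1)) := hseq
    _ = _ := by
      rw [sqrt_mul zero_le_two]
      field_simp

theorem Nat.pow_mul_factorial_le_factorial_two_mul (m : ℕ) :
    (4 * m / exp 1) ^ m * m ! ≤ ((2 * m)! : ℝ) := by
  rcases eq_or_ne m 0 with rfl | hm
  · simp
  have he : exp 1 ≤ 2 * √π := by
    have : 3 / 2 ≤ √π := Real.le_sqrt_of_sq_le (by linarith [pi_gt_three])
    linarith [exp_one_lt_d9]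
  have hlow := Stirling.le_factorial_stirling (2 * m)
  calc (4 * m / exp 1) ^ m * m ! ≤ (4 * m / exp 1) ^ m * (exp 1 * √m * (m / exp 1) ^ m) := by
        gcongr
        exact Nat.factorial_le_exp_one_mul_sqrt_mul_pow hm
    _ = exp 1 * √m * ((2 * m / exp 1) ^ 2) ^ m := by
        rw [show (2 * m / exp 1) ^ 2 = 4 * m / exp 1 * (m / exp 1) by ring, mul_pow]
        ring
    _ ≤ 2 * √π * √m * ((2 * m / exp 1) ^ 2) ^ m := by gcongr
    _ = √(2 * π * (2 * m : ℕ)) * ((2 * m : ℕ) / exp 1) ^ (2 * m) := by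
        rw [pow_mul, sqrt_mul (by positivity), sqrt_mul (by positivity)]
        push_cast
        rw [sqrt_mul zero_le_two, show √2 * √π * (√2 * √m) = √2 * √2 * √π * √m by ring,
          mul_self_sqrt zero_le_two]
    _ ≤ _ := hlow

theorem factorial_div_factorial_two_mul_mul_pow_le (m : ℕ) :
    (m ! / (2 * m)! : ℝ) * (m / 5) ^ m ≤ (exp 1 / 20) ^ m := by
  rw [div_mul_eq_mul_div, div_le_iff₀ (by positivity)]
  calc (m ! : ℝ) * (m / 5) ^ m = (exp 1 / 20) ^ m * ((4 * m / exp 1) ^ m * m !) := by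
        rw [← mul_assoc, ← mul_pow]; field_simp; ring
    _ ≤ _ := by gcongr; exact Nat.pow_mul_factorial_le_factorial_two_mul m

lemma rpow_neg_le_rpow_sub_mul_rpow_neg {x y s K : ℝ} (hy : 0 < y) (hyx : y ≤ x) (hsK : s ≤ K) :
    x ^ (-K) ≤ y ^ (s - K) * x ^ (-s) := by
  rw [show -K = s - K + -s by ring, rpow_add (hy.trans_le hyx)]
  exact mul_le_mul_of_nonneg_right (rpow_le_rpow_of_nonpos hy hyx (by linarith))
    (rpow_nonneg (hy.le.trans hyx) _)

theorem norm_Tlk_le_of_lt {l k c n : ℕ} {s : ℝ} (hl : 0 < l) (hk : 0 < k) (hc : 0 < c)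
    (hn : 0 < n) (hlt : π * l / (c * n) < k / 5) (hs : s ≤ 2 * k) :
    ‖Tlk l k c n‖ ≤ (l : ℝ) ^ (-(1 / 2 : ℝ)) * (5 * π * l / k) ^ s * (exp 1 / 20) ^ (2 * k) *
      ((c : ℝ) ^ (-s) * (n : ℝ) ^ (-s)) := by
  have hy : (0 : ℝ) < 5 / (2 * k) := by positivity
  have hyx : (5 : ℝ) / (2 * k) ≤ c * n / (2 * π * l) := by
    rw [div_lt_div_iff₀ (by positivity) (by norm_num)] at hlt
    rw [div_le_div_iff₀ (by positivity) (by positivity)]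
    nlinarith
  have hpow : ((5 : ℝ) / (2 * k)) ^ (s - 2 * k) * (c * n / (2 * π * l)) ^ (-s) =
      (5 * π * l / k) ^ s * ((c : ℝ) ^ (-s) * (n : ℝ) ^ (-s)) *
        ((2 * k : ℕ) / 5 : ℝ) ^ (2 * k) := by
    rw [rpow_sub hy, rpow_neg (by positivity), rpow_neg (Nat.cast_nonneg c),
      rpow_neg (Nat.cast_nonneg n), show 5 * π * l / k = 5 / (2 * k) * (2 * π * l) by
        field_simp,
      mul_rpow hy.le (by positivity),
      div_rpow (by positivity : (0 : ℝ) ≤ c * n) (by positivity : (0 : ℝ) ≤ 2 * π * l),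
      mul_rpow (Nat.cast_nonneg c) (Nat.cast_nonneg n),
      show (2 * k : ℝ) = ((2 * k : ℕ) : ℝ) by push_cast; ring, rpow_natCast]
    push_cast
    field_simp
    rw [← mul_pow, div_mul_div_cancel₀ (by positivity), div_self (by norm_num), one_pow]
  calc _ ≤ (l : ℝ) ^ (-(1 / 2 : ℝ)) * (c * n / (2 * π * l)) ^ (-(2 * k : ℝ)) *
        ((2 * k)! / (2 * (2 * k))!) := norm_Tlk_le hl hk hc hn
    _ ≤ (l : ℝ) ^ (-(1 / 2 : ℝ)) *
        ((5 / (2 * k)) ^ (s - 2 * k) * (c * n / (2 * π * l)) ^ (-s)) *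
        ((2 * k)! / (2 * (2 * k))!) := by
        gcongr
        exact rpow_neg_le_rpow_sub_mul_rpow_neg hy hyx hs
    _ = (l : ℝ) ^ (-(1 / 2 : ℝ)) * (5 * π * l / k) ^ s * ((c : ℝ) ^ (-s) * (n : ℝ) ^ (-s)) *
        (((2 * k)! / (2 * (2 * k))!) * ((2 * k : ℕ) / 5 : ℝ) ^ (2 * k)) := by
        rw [hpow]; ring
    _ ≤ (l : ℝ) ^ (-(1 / 2 : ℝ)) * (5 * π * l / k) ^ s * ((c : ℝ) ^ (-s) * (n : ℝ) ^ (-s)) *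
        (exp 1 / 20) ^ (2 * k) := by
        gcongr
        exact factorial_div_factorial_two_mul_mul_pow_le (2 * k)
    _ = _ := by ring

theorem norm_tsum_le_mul_sq_tsum_rpow_neg {E : Type*} [SeminormedAddCommGroup E]
    {f : ℕ × ℕ → E} {s C : ℝ} (hs : 1 < s)
    (hf : ∀ p, ‖f p‖ ≤ C * ((p.1 : ℝ) ^ (-s) * (p.2 : ℝ) ^ (-s))) :
    ‖∑' p, f p‖ ≤ C * (∑' n : ℕ, (n : ℝ) ^ (-s)) ^ 2 := by
  have hZ : Summable fun n : ℕ => ‖(n : ℝ) ^ (-s)‖ := by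
    simpa [abs_of_nonneg (rpow_nonneg (Nat.cast_nonneg _) _)] using
      Real.summable_nat_rpow.2 (by linarith : -s < -1)
  have hg := (summable_mul_of_summable_norm hZ hZ).mul_left C
  have hfn : Summable fun p => ‖f p‖ := hg.of_nonneg_of_le (fun _ => norm_nonneg _) hf
  calc ‖∑' p, f p‖ ≤ ∑' p, ‖f p‖ := norm_tsum_le_tsum_norm hfn
    _ ≤ ∑' p : ℕ × ℕ, C * ((p.1 : ℝ) ^ (-s) * (p.2 : ℝ) ^ (-s)) := hfn.tsum_le_tsum hf hg
    _ = _ := by rw [tsum_mul_left, ← tsum_mul_tsum_of_summable_norm hZ hZ, sq]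

lemma rpow_neg_half_mul_rpow_le {a l k s ε : ℝ} (ha : 0 ≤ a) (hl : 1 ≤ l) (hk : 1 ≤ k)
    (hs : 1 ≤ s) (hsε : s ≤ 1 + ε) :
    l ^ (-(1 / 2 : ℝ)) * (a * l / k) ^ s ≤ a ^ s * l ^ ((1 : ℝ) / 2 + ε) * k⁻¹ := by
  have hl_pow : l ^ (-(1 / 2 : ℝ)) * l ^ s ≤ l ^ ((1 : ℝ) / 2 + ε) := by
    rw [← rpow_add (by positivity)]
    exact rpow_le_rpow_of_exponent_le hl (by linarith)
  have hk_pow : k ≤ k ^ s := by simpa using rpow_le_rpow_of_exponent_le hk hs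
  calc _ = a ^ s * (l ^ (-(1 / 2 : ℝ)) * l ^ s) * (k ^ s)⁻¹ := by
        rw [div_rpow (by positivity) (by positivity), mul_rpow ha (by positivity)]
        ring
    _ ≤ _ := by gcongr

theorem stmt10 (ε : ℝ) (hε : 0 < ε) :
    ∃ A > 0, ∀ l k : ℕ, 0 < l → 0 < k →
      ‖W1 l k‖ ≤
        A * (l : ℝ) ^ ((1 : ℝ) / 2 + ε) * (k : ℝ)⁻¹ * (Real.exp 1 / 20) ^ (2 * k) := by
  set s := min (1 + ε) 2
  have hs : 1 < s := lt_min (by linarith) one_lt_two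
  set Z := ∑' n : ℕ, (n : ℝ) ^ (-s)
  have hZ : 0 < Z := (Real.summable_nat_rpow.2 (by linarith)).tsum_pos
    (fun n => rpow_nonneg n.cast_nonneg _) 1 (by simp)
  refine ⟨(5 * π) ^ s * Z ^ 2, by positivity, fun l k hl hk => ?_⟩
  have hl1 : (1 : ℝ) ≤ l := by exact_mod_cast hl
  have hk1 : (1 : ℝ) ≤ k := by exact_mod_cast hk
  have hC := rpow_neg_half_mul_rpow_le (by positivity : 0 ≤ 5 * π) hl1 hk1 hs.le
    (min_le_left (1 + ε) 2)
  calc ‖W1 l k‖ ≤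
        (l : ℝ) ^ (-(1 / 2 : ℝ)) * (5 * π * l / k) ^ s * (exp 1 / 20) ^ (2 * k) * Z ^ 2 := by
        refine norm_tsum_le_mul_sq_tsum_rpow_neg hs fun p => ?_
        split_ifs with h
        · exact norm_Tlk_le_of_lt hl hk h.1 h.2.1 h.2.2.2 ((min_le_right _ _).trans (by linarith))
        · rw [norm_zero]; positivity
    _ ≤ (5 * π) ^ s * (l : ℝ) ^ ((1 : ℝ) / 2 + ε) * (k : ℝ)⁻¹ * (exp 1 / 20) ^ (2 * k) * Z ^ 2 := by
        gcongr
    _ = _ := by ring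
end
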